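/- The poset P_𝓛 is pure if and only if the following conditions hold: (a) for every s ∈ [t] and all i, k ∈ [p_s, q_s] with i ≤ k, if ε_i > 1 and ε_k > 1 then u_k − u_i = 2(k − i); (b) for every s ∈ [t] and all i, k ∈ [p_s, q_s] with i ≤ k, if θ_{i−1} > 1 and θ_{k−1} > 1 then v_k − v_i = 2(k − i); (c) for every s ∈ [t], Δ_{p_s} + i_s − p_s = Δ_1 + i_1 − 1. -/

import Mathlib

namespace LadderPaper

/-- The tuple `a_{i,j}`: entry `t` is `u t` for `t < i` and `max (j + (t - i)) (u t)` for
`t ≥ i` (indices `t ∈ [1,n]`; entries outside `[1,n]` are set to `0`). -/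
def atuple (u : ℕ → ℤ) (n i : ℕ) (j : ℤ) : ℕ → ℤ := fun t =>
  if 1 ≤ t ∧ t ≤ n then
    (if t < i then u t else max (j + ((t : ℤ) - (i : ℤ))) (u t))
  else 0

/-- The tuple `b_{i,j}`: like `a_{i,j}` but with `i`-th entry `j - 1`. -/
def btuple (u : ℕ → ℤ) (n i : ℕ) (j : ℤ) : ℕ → ℤ := fun t =>
  if 1 ≤ t ∧ t ≤ n then
    (if t < i then u t
     else if t = i then j - 1
     else max (j + ((t : ℤ) - (i : ℤ))) (u t))
  else 0

/-- The tuple `(u_1, …, u_n)`. -/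
def utuple (u : ℕ → ℤ) (n : ℕ) : ℕ → ℤ := fun t =>
  if 1 ≤ t ∧ t ≤ n then u t else 0

/-- The lattice `𝓛` of tuples `c` with `u t ≤ c t ≤ v t` for `t ∈ [1,n]`, strictly
increasing entries, and (normalization) `c t = 0` outside `[1,n]`.  It carries the
componentwise (induced product) order. -/
def ladderL (n : ℕ) (u v : ℕ → ℤ) : Set (ℕ → ℤ) :=
  {c | (∀ t, 1 ≤ t → t ≤ n → u t ≤ c t ∧ c t ≤ v t) ∧
       (∀ t, 1 ≤ t → t + 1 ≤ n → c t < c (t + 1)) ∧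
       (∀ t, t = 0 ∨ n < t → c t = 0)}

/-- The set `P_𝓛 = { a_{i,j} : i ∈ [n], j ∈ [u_i + 1, v_i] }`. -/
def PL (n : ℕ) (u v : ℕ → ℤ) : Set (ℕ → ℤ) :=
  {x | ∃ i : ℕ, ∃ j : ℤ, 1 ≤ i ∧ i ≤ n ∧ u i + 1 ≤ j ∧ j ≤ v i ∧ x = atuple u n i j}

/-- The product poset `𝓛 × [r]`. -/
def ladderLr (n : ℕ) (u v : ℕ → ℤ) (r : ℤ) : Set ((ℕ → ℤ) × ℤ) :=
  {p | p.1 ∈ ladderL n u v ∧ 1 ≤ p.2 ∧ p.2 ≤ r}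

/-- The set `P_{𝓛×[r]} = { (a_{i,j}, 1) } ∪ { ((u_1,…,u_n), k) : k ∈ [2,r] }`. -/
def PLr (n : ℕ) (u v : ℕ → ℤ) (r : ℤ) : Set ((ℕ → ℤ) × ℤ) :=
  {p | (p.1 ∈ PL n u v ∧ p.2 = 1) ∨ (p.1 = utuple u n ∧ 2 ≤ p.2 ∧ p.2 ≤ r)}

/-- `ε_i > 1`, with the convention `ε_n > 1` (i.e. `i = n` or `u_{i+1} - u_i > 1`). -/
def epsGt1 (u : ℕ → ℤ) (n i : ℕ) : Prop := i = n ∨ 1 < u (i + 1) - u i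

/-- `θ_{i-1} > 1`, with the convention `θ_0 > 1` (i.e. `i = 1` or `v_i - v_{i-1} > 1`). -/
def thetaGt1 (v : ℕ → ℤ) (i : ℕ) : Prop := i = 1 ∨ 1 < v i - v (i - 1)

/-- Membership in `C = { i ∈ [n-1] : v_i < u_{i+1} } ∪ { n }`. -/
def inC (n : ℕ) (u v : ℕ → ℤ) (i : ℕ) : Prop :=
  (1 ≤ i ∧ i + 1 ≤ n ∧ v i < u (i + 1)) ∨ i = n

/-- The set `C = { i ∈ [n-1] : v_i < u_{i+1} } ∪ { n }`. -/
def Cset (n : ℕ) (u v : ℕ → ℤ) : Set ℕ :=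
  {i | 1 ≤ i ∧ i + 1 ≤ n ∧ v i < u (i + 1)} ∪ {n}

/-- `[p,q]` is one of the blocks `[p_s, q_s]` determined by `C`: `q ∈ C`,
no element of `C` lies in `[p, q-1]`, and either `p = 1` or `p - 1 ∈ C`. -/
def IsBlock (n : ℕ) (u v : ℕ → ℤ) (p q : ℕ) : Prop :=
  1 ≤ p ∧ p ≤ q ∧ q ≤ n ∧ inC n u v q ∧
    (∀ j, p ≤ j → j < q → ¬ inC n u v j) ∧ (p = 1 ∨ inC n u v (p - 1))

/-- `i0 = min { i ∈ [p,q] : ε_i > 1 }` (with the convention `ε_n > 1`). -/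
def IsBlockMin (n : ℕ) (u : ℕ → ℤ) (p q i0 : ℕ) : Prop :=
  p ≤ i0 ∧ i0 ≤ q ∧ epsGt1 u n i0 ∧ ∀ j, p ≤ j → j < i0 → ¬ epsGt1 u n j

/-- The comparability graph of a poset: two distinct elements are adjacent
iff they are comparable. -/
def compGraph (α : Type*) [Preorder α] : SimpleGraph α where
  Adj x y := x ≠ y ∧ (x ≤ y ∨ y ≤ x)
  symm := ⟨fun x y h => ⟨Ne.symm h.1, Or.symm h.2⟩⟩
  loopless := ⟨fun x h => h.1 rfl⟩

/-- A poset is pure if all of its maximal chains have the same cardinality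
(equivalently, the same length). -/
def IsPure (α : Type*) [Preorder α] : Prop :=
  ∀ A B : Set α, IsMaxChain (· ≤ ·) A → IsMaxChain (· ≤ ·) B → A.ncard = B.ncard

/-!
`P_𝓛` is graded by `rank a_{i,j} = j - 2 i`: one has `a_{i,j} ≤ a_{k,l}` iff `k ≤ i` and
`j - i ≤ l - k`, and every cover raises the rank by one. In a finite `ℤ`-graded poset a maximal
chain from a minimal element `a` to a maximal element `b` has `grade b - grade a + 1` elements, so
purity says that this grade difference is the same for all comparable minimal/maximal pairs.

The minimal elements are the `a_{i, u_i + 1}` with `ε_i > 1`, the maximal ones the `a_{k, v_k}`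
with `θ_{k-1} > 1`, so purity means that `(v_k - 2k) - (u_i - 2i)` is constant over comparable such
pairs. A comparable pair never straddles an element of `C`, so it lies in a single block
`[p_s, q_s]`. There (a) and (b) say that `u_i - 2i` and `v_k - 2k` do not depend on the chosen
points, which reduces the value to that of the pair `(i_s, p_s)`, i.e. `Δ_{p_s} + i_s - p_s`, and
(c) says that this is the same for all blocks. Conversely, comparing two pairs sharing an endpoint
yields (a) and (b) for consecutive points of a block.
-/

section Graded

theorem range_grade_eq_Icc {β : Type*} [LinearOrder β] [Finite β] [GradeOrder ℤ β] {a b : β}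
    (ha : IsMin a) (hb : IsMax b) :
    Set.range (grade ℤ : β → ℤ) = Set.Icc (grade ℤ a) (grade ℤ b) := by
  refine (Set.range_subset_iff.2 fun x =>
    Set.mem_Icc.2 ⟨grade_mono (ha.isBot x), grade_mono (hb.isTop x)⟩).antisymm fun r hr => ?_
  -- the largest element of grade at most `r` has grade `r`, or else its cover would be larger
  obtain ⟨x, hxr, hxmax⟩ :=
    Set.exists_max_image {x | grade ℤ x ≤ r} (grade ℤ) (Set.toFinite _) ⟨a, hr.1⟩
  refine ⟨x, le_antisymm hxr (not_lt.1 fun (hlt : grade ℤ x < r) => ?_)⟩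
  obtain ⟨y, hxy, -⟩ := exists_covBy_le_of_lt (grade_lt_grade_iff.1 (hlt.trans_le hr.2))
  have hy : grade ℤ x + 1 = grade ℤ y := Order.covBy_iff_add_one_eq.1 (hxy.grade ℤ)
  exact (grade_strictMono hxy.lt).not_ge (hxmax y (show grade ℤ y ≤ r by omega))

theorem natCard_eq_grade_sub_grade {β : Type*} [LinearOrder β] [Finite β] [GradeOrder ℤ β]
    {a b : β} (ha : IsMin a) (hb : IsMax b) :
    (Nat.card β : ℤ) = grade ℤ b - grade ℤ a + 1 := by
  rw [← Nat.card_range_of_injective (grade_injective (𝕆 := ℤ)), range_grade_eq_Icc ha hb,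
    Nat.card_eq_fintype_card]
  convert Int.card_fintype_Icc_of_le (a := grade ℤ a) (b := grade ℤ b) _ using 1
  · ring
  · have := grade_mono (𝕆 := ℤ) (ha.isBot b); omega

theorem _root_.Flag.exists_isMin_isMax {α : Type*} [PartialOrder α] [Finite α] [Nonempty α]
    (s : Flag α) : ∃ a ∈ s, ∃ b ∈ s, IsMin a ∧ IsMax b ∧ a ≤ b := by
  classical
  have : Nonempty s := Set.Nonempty.to_subtype (s.maxChain.nonempty_iff.1 ‹_›)
  obtain ⟨a, ha⟩ := Finite.exists_min (id : s → s)
  obtain ⟨b, hb⟩ := Finite.exists_max (id : s → s)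
  exact ⟨a, a.2, b, b.2, Flag.isMin_coe.2 fun x _ => ha x, Flag.isMax_coe.2 fun x _ => hb x,
    ha b⟩

variable {α : Type*} [PartialOrder α] [Finite α] [GradeOrder ℤ α]

theorem _root_.Flag.ncard_eq_grade_sub_grade (s : Flag α) {a b : α} (ha : a ∈ s) (hb : b ∈ s)
    (hmin : IsMin a) (hmax : IsMax b) :
    ((s : Set α).ncard : ℤ) = grade ℤ b - grade ℤ a + 1 := by
  classical
  exact natCard_eq_grade_sub_grade (β := s) (a := ⟨a, ha⟩) (b := ⟨b, hb⟩)
    (Flag.isMin_coe.1 hmin) (Flag.isMax_coe.1 hmax)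

theorem isPure_iff_grade_sub_grade_eq :
    IsPure α ↔ ∀ a b a' b' : α, IsMin a → IsMax b → a ≤ b → IsMin a' → IsMax b' → a' ≤ b' →
      grade ℤ b - grade ℤ a = grade ℤ b' - grade ℤ a' := by
  constructor
  · intro hpure a b a' b' ha hb hab ha' hb' hab'
    obtain ⟨s, has, hbs⟩ := Flag.exists_mem_mem hab
    obtain ⟨s', has', hbs'⟩ := Flag.exists_mem_mem hab'
    have hss' := hpure s s' s.maxChain s'.maxChain
    have hs := s.ncard_eq_grade_sub_grade has hbs ha hb
    have hs' := s'.ncard_eq_grade_sub_grade has' hbs' ha' hb'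
    omega
  · intro hconst A B hA hB
    rcases isEmpty_or_nonempty α with hα | hα
    · rw [Set.eq_empty_of_isEmpty A, Set.eq_empty_of_isEmpty B]
    let s := Flag.ofIsMaxChain A hA
    let s' := Flag.ofIsMaxChain B hB
    obtain ⟨a, has, b, hbs, ha, hb, hab⟩ := s.exists_isMin_isMax
    obtain ⟨a', has', b', hbs', ha', hb', hab'⟩ := s'.exists_isMin_isMax
    have := hconst a b a' b' ha hb hab ha' hb' hab'
    have hA' : (A.ncard : ℤ) = grade ℤ b - grade ℤ a + 1 :=
      s.ncard_eq_grade_sub_grade has hbs ha hb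
    have hB' : (B.ncard : ℤ) = grade ℤ b' - grade ℤ a' + 1 :=
      s'.ncard_eq_grade_sub_grade has' hbs' ha' hb'
    omega

end Graded

section Sequences

theorem le_of_le_succ_on_Ico {β : Type*} [Preorder β] {f : ℕ → β} {a b : ℕ} (hab : a ≤ b)
    (h : ∀ t, a ≤ t → t < b → f t ≤ f (t + 1)) : f a ≤ f b := by
  induction b, hab using Nat.le_induction with
  | base => exact le_rfl
  | succ b hab ih => exact (ih fun t h1 h2 => h t h1 (by omega)).trans (h b hab (by omega))

variable {f : ℕ → ℤ} {a b : ℕ}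

theorem sub_le_sub_of_lt_succ (hab : a ≤ b) (h : ∀ t, a ≤ t → t < b → f t < f (t + 1)) :
    f a - a ≤ f b - b :=
  le_of_le_succ_on_Ico (f := fun t => f t - t) hab fun t h1 h2 => by
    have := h t h1 h2; push_cast; omega

theorem sub_le_sub_of_succ_le (hab : a ≤ b) (h : ∀ t, a ≤ t → t < b → f (t + 1) ≤ f t + 1) :
    f b - b ≤ f a - a := by
  have := le_of_le_succ_on_Ico (f := fun t => (t : ℤ) - f t) hab fun t h1 h2 => by
    have := h t h1 h2; push_cast; omega
  omega

theorem exists_least_of_mem_Icc {P : ℕ → Prop} (hab : a ≤ b) (hb : P b) :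
    ∃ c, a ≤ c ∧ c ≤ b ∧ P c ∧ ∀ t, a ≤ t → t < c → ¬ P t := by
  classical
  have hex : ∃ c, a ≤ c ∧ P c := ⟨b, hab, hb⟩
  obtain ⟨hac, hc⟩ := Nat.find_spec hex
  exact ⟨_, hac, Nat.find_min' hex ⟨hab, hb⟩, hc,
    fun t hat htc ht => Nat.find_min hex htc ⟨hat, ht⟩⟩

theorem exists_greatest_of_mem_Icc {P : ℕ → Prop} (hab : a ≤ b) (ha : P a) :
    ∃ c, a ≤ c ∧ c ≤ b ∧ P c ∧ ∀ t, c < t → t ≤ b → ¬ P t := by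
  classical
  have hP : a ≤ a ∧ P a := ⟨le_rfl, ha⟩
  obtain ⟨hac, hc⟩ := Nat.findGreatest_spec (P := fun t => a ≤ t ∧ P t) hab hP
  exact ⟨_, hac, Nat.findGreatest_le b, hc, fun t hct htb ht =>
    Nat.findGreatest_is_greatest hct htb ⟨by omega, ht⟩⟩

theorem eq_of_eq_of_consecutive {β : Type*} {P : ℕ → Prop} {g : ℕ → β}
    (h : ∀ i k, i < k → P i → P k → (∀ j, i < j → j < k → ¬ P j) → g i = g k)
    {i k : ℕ} (hik : i ≤ k) (hi : P i) (hk : P k) : g i = g k := by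
  induction k using Nat.strong_induction_on with
  | _ k ih =>
    rcases hik.eq_or_lt with rfl | hik
    · rfl
    obtain ⟨j, hij, hjk, hj, hgap⟩ := exists_greatest_of_mem_Icc (b := k - 1) (by omega) hi
    exact (ih j (by omega) hij hj).trans
      (h j k (by omega) hj hk fun t h1 h2 => hgap t h1 (by omega))

end Sequences

structure IsLadder (n : ℕ) (u v : ℕ → ℤ) : Prop where
  u_lt_succ : ∀ i, 1 ≤ i → i + 1 ≤ n → u i < u (i + 1)
  v_lt_succ : ∀ i, 1 ≤ i → i + 1 ≤ n → v i < v (i + 1)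
  u_lt_v : ∀ i, 1 ≤ i → i ≤ n → u i < v i

namespace IsLadder

variable {n : ℕ} {u v : ℕ → ℤ} {i k : ℕ}

theorem u_sub_le (L : IsLadder n u v) (hi : 1 ≤ i) (hik : i ≤ k) (hk : k ≤ n) :
    u i - i ≤ u k - k :=
  sub_le_sub_of_lt_succ hik fun t h1 h2 => L.u_lt_succ t (by omega) (by omega)

theorem v_sub_le (L : IsLadder n u v) (hi : 1 ≤ i) (hik : i ≤ k) (hk : k ≤ n) :
    v i - i ≤ v k - k :=
  sub_le_sub_of_lt_succ hik fun t h1 h2 => L.v_lt_succ t (by omega) (by omega)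

theorem u_sub_eq (L : IsLadder n u v) (hi : 1 ≤ i) (hik : i ≤ k) (hk : k ≤ n)
    (h : ∀ t, i ≤ t → t < k → ¬ epsGt1 u n t) : u k - k = u i - i :=
  le_antisymm (sub_le_sub_of_succ_le hik fun t h1 h2 => by
    have := h t h1 h2; simp only [epsGt1, not_or] at this; omega) (L.u_sub_le hi hik hk)

theorem v_sub_eq (L : IsLadder n u v) (hi : 1 ≤ i) (hik : i ≤ k) (hk : k ≤ n)
    (h : ∀ t, i < t → t ≤ k → ¬ thetaGt1 v t) : v k - k = v i - i :=
  le_antisymm (sub_le_sub_of_succ_le hik fun t h1 h2 => by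
    have := h (t + 1) (by omega) (by omega)
    simp only [thetaGt1, not_or, Nat.add_sub_cancel] at this; omega) (L.v_sub_le hi hik hk)

end IsLadder

section Cells

variable {n : ℕ} {u v : ℕ → ℤ} {i k : ℕ} {j l : ℤ}

def IsCell (n : ℕ) (u v : ℕ → ℤ) (i : ℕ) (j : ℤ) : Prop :=
  1 ≤ i ∧ i ≤ n ∧ u i < j ∧ j ≤ v i

theorem atuple_le_atuple (hki : k ≤ i) (h : j - i ≤ l - k) :
    atuple u n i j ≤ atuple u n k l := by
  intro t
  simp only [atuple]
  split_ifs <;> omega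

theorem atuple_le_atuple_iff (hi : 1 ≤ i) (hin : i ≤ n) (hj : u i < j) :
    atuple u n i j ≤ atuple u n k l ↔ k ≤ i ∧ j - i ≤ l - k := by
  refine ⟨fun h => ?_, fun h => atuple_le_atuple h.1 h.2⟩
  have := h i
  simp only [atuple] at this
  split_ifs at this <;> omega

def ofCell (h : IsCell n u v i j) : PL n u v :=
  ⟨atuple u n i j, i, j, h.1, h.2.1, h.2.2.1, h.2.2.2, rfl⟩

theorem exists_ofCell (x : PL n u v) : ∃ i j, ∃ h : IsCell n u v i j, x = ofCell h := by
  obtain ⟨_, i, j, h1, h2, h3, h4, rfl⟩ := x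
  exact ⟨i, j, ⟨h1, h2, h3, h4⟩, rfl⟩

theorem ofCell_le_ofCell_iff (h : IsCell n u v i j) (h' : IsCell n u v k l) :
    ofCell h ≤ ofCell h' ↔ k ≤ i ∧ j - i ≤ l - k :=
  atuple_le_atuple_iff h.1 h.2.1 h.2.2.1

theorem ofCell_inj (h : IsCell n u v i j) (h' : IsCell n u v k l) :
    ofCell h = ofCell h' ↔ i = k ∧ j = l := by
  refine ⟨fun he => ?_, by rintro ⟨rfl, rfl⟩; rfl⟩
  have := (ofCell_le_ofCell_iff h h').1 he.le
  have := (ofCell_le_ofCell_iff h' h).1 he.ge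
  omega

theorem finite_PL : (PL n u v).Finite := by
  refine ((Set.finite_Icc 1 n).biUnion fun i _ =>
    (Set.finite_Icc (u i + 1) (v i)).image (atuple u n i)).subset ?_
  rintro _ ⟨i, j, h1, h2, h3, h4, rfl⟩
  exact Set.mem_biUnion ⟨h1, h2⟩ ⟨j, ⟨h3, h4⟩, rfl⟩

/-- The grading of `P_𝓛`: `a_{i,j}` has rank `j - 2 i` (the indices are recovered by choice). -/
noncomputable def rank (x : PL n u v) : ℤ :=
  x.2.choose_spec.choose - 2 * x.2.choose

theorem rank_ofCell (h : IsCell n u v i j) : rank (ofCell h) = j - 2 * i := by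
  obtain ⟨h1, h2, h3, h4, he⟩ := (ofCell h).2.choose_spec.choose_spec
  have := (ofCell_inj ⟨h1, h2, h3, h4⟩ h).1 (Subtype.ext he.symm)
  unfold rank
  omega

theorem rank_strictMono : StrictMono (rank : PL n u v → ℤ) := by
  intro x y hxy
  obtain ⟨i, j, h, rfl⟩ := exists_ofCell x
  obtain ⟨k, l, h', rfl⟩ := exists_ofCell y
  have hle := (ofCell_le_ofCell_iff h h').1 hxy.le
  have hne := (ofCell_inj h h').not.1 hxy.ne
  rw [rank_ofCell, rank_ofCell]
  omega

theorem exists_between_of_rank_add_one_lt (L : IsLadder n u v) {x y : PL n u v} (hxy : x ≤ y)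
    (hr : rank x + 1 < rank y) : ∃ z, x < z ∧ z < y := by
  obtain ⟨i, j, h, rfl⟩ := exists_ofCell x
  obtain ⟨k, l, h', rfl⟩ := exists_ofCell y
  obtain ⟨hki, hd⟩ := (ofCell_le_ofCell_iff h h').1 hxy
  rw [rank_ofCell, rank_ofCell] at hr
  have ⟨hi, hin, hju, hjv⟩ := h
  have ⟨hk, hkn, hlu, hlv⟩ := h'
  suffices ∃ r s, ∃ hz : IsCell n u v r s, k ≤ r ∧ r ≤ i ∧ j - i ≤ s - r ∧ s - r ≤ l - k ∧
      j - 2 * i < s - 2 * r ∧ s - 2 * r < l - 2 * k by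
    obtain ⟨r, s, hz, hkr, hri, hjs, hsl, hrx, hry⟩ := this
    refine ⟨ofCell hz, lt_of_le_of_ne ((ofCell_le_ofCell_iff _ hz).2 ⟨hri, hjs⟩) ?_,
      lt_of_le_of_ne ((ofCell_le_ofCell_iff hz _).2 ⟨hkr, hsl⟩) ?_⟩
    · exact mt (ofCell_inj _ _).1 (by omega)
    · exact mt (ofCell_inj _ _).1 (by omega)
  -- step along the row of `x`, along its diagonal, or onto the diagonal of `y`
  rcases hki.eq_or_lt with rfl | hki
  · exact ⟨k, j + 1, ⟨hk, hkn, by omega, by omega⟩, le_rfl, le_rfl, by omega, by omega,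
      by omega, by omega⟩
  rcases hd.eq_or_lt with hd | hd
  · obtain ⟨r, rfl⟩ : ∃ r, i = r + 1 := ⟨i - 1, by omega⟩
    have hur := L.u_sub_le (show 1 ≤ r by omega) (by omega : r ≤ r + 1) hin
    have hvr := L.v_sub_le hk (show k ≤ r by omega) (by omega)
    push_cast at *
    exact ⟨r, j - 1, ⟨by omega, by omega, by omega, by omega⟩, by omega, by omega, by omega,
      by omega, by omega, by omega⟩
  · have hvi := L.v_sub_le hk hki.le hin
    exact ⟨i, l + i - k, ⟨hi, hin, by omega, by omega⟩, hki.le, le_rfl, by omega, by omega,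
      by omega, by omega⟩

end Cells

section Extremal

variable {n : ℕ} {u v : ℕ → ℤ} {i k : ℕ} {j l : ℤ}

noncomputable abbrev gradeOrder (L : IsLadder n u v) : GradeOrder ℤ (PL n u v) where
  grade := rank
  grade_strictMono := rank_strictMono
  covBy_grade x y hxy := by
    have := rank_strictMono hxy.lt
    refine Order.covBy_iff_add_one_eq.2 (le_antisymm this (not_lt.1 fun hr => ?_))
    obtain ⟨z, hxz, hzy⟩ := exists_between_of_rank_add_one_lt L hxy.le hr
    exact hxy.2 hxz hzy

theorem isMin_ofCell_iff (L : IsLadder n u v) (h : IsCell n u v i j) :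
    IsMin (ofCell h) ↔ j = u i + 1 ∧ epsGt1 u n i := by
  obtain ⟨hi, hin, hju, hjv⟩ := id h
  constructor
  · intro hmin
    have below : ∀ {k l} (h' : IsCell n u v k l), i ≤ k → l - k ≤ j - i → i = k ∧ j = l :=
      fun h' hik hd => (ofCell_inj h h').1
        (le_antisymm (hmin ((ofCell_le_ofCell_iff h' h).2 ⟨hik, hd⟩))
          ((ofCell_le_ofCell_iff h' h).2 ⟨hik, hd⟩))
    refine ⟨by_contra fun hj => ?_, by_contra fun hε => ?_⟩
    · have := below (l := j - 1) ⟨hi, hin, by omega, by omega⟩ le_rfl (by omega)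
      omega
    · simp only [epsGt1, not_or] at hε
      have := L.u_lt_succ i hi (by omega)
      have := L.u_lt_v (i + 1) (by omega) (by omega)
      have := below (k := i + 1) (l := u (i + 1) + 1) ⟨by omega, by omega, by omega, by omega⟩
        (by omega) (by push_cast; omega)
      omega
  · rintro ⟨rfl, hε⟩ y hy
    obtain ⟨k, l, h', rfl⟩ := exists_ofCell y
    obtain ⟨hik, hd⟩ := (ofCell_le_ofCell_iff h' h).1 hy
    obtain rfl : k = i := by
      refine le_antisymm (not_lt.1 fun hik' => ?_) hik
      obtain ⟨-, hkn, hlu, -⟩ := h'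
      rcases hε with rfl | hε
      · omega
      have := L.u_sub_le (show 1 ≤ i + 1 by omega) (show i + 1 ≤ k by omega) hkn
      push_cast at this
      omega
    exact (ofCell_le_ofCell_iff h h').2 ⟨le_rfl, by have := h'.2.2.1; omega⟩

theorem isMax_ofCell_iff (L : IsLadder n u v) (h : IsCell n u v i j) :
    IsMax (ofCell h) ↔ j = v i ∧ thetaGt1 v i := by
  obtain ⟨hi, hin, hju, hjv⟩ := id h
  constructor
  · intro hmax
    have above : ∀ {k l} (h' : IsCell n u v k l), k ≤ i → j - i ≤ l - k → i = k ∧ j = l :=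
      fun h' hki hd => (ofCell_inj h h').1
        (le_antisymm ((ofCell_le_ofCell_iff h h').2 ⟨hki, hd⟩)
          (hmax ((ofCell_le_ofCell_iff h h').2 ⟨hki, hd⟩)))
    refine ⟨by_contra fun hj => ?_, by_contra fun hθ => ?_⟩
    · have := above (l := j + 1) ⟨hi, hin, by omega, by omega⟩ le_rfl (by omega)
      omega
    · simp only [thetaGt1, not_or] at hθ
      obtain ⟨r, rfl⟩ : ∃ r, i = r + 1 := ⟨i - 1, by omega⟩
      simp only [Nat.add_sub_cancel] at hθ
      have := L.v_lt_succ r (by omega) hin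
      have := L.u_lt_v r (by omega) (by omega)
      have := above (k := r) (l := v r) ⟨by omega, by omega, by omega, le_rfl⟩ (by omega)
        (by push_cast; omega)
      omega
  · rintro ⟨rfl, hθ⟩ y hy
    obtain ⟨k, l, h', rfl⟩ := exists_ofCell y
    obtain ⟨hki, hd⟩ := (ofCell_le_ofCell_iff h h').1 hy
    obtain rfl : k = i := by
      refine le_antisymm hki (not_lt.1 fun hki' => ?_)
      obtain ⟨hk, -, -, hlv⟩ := h'
      rcases hθ with rfl | hθ
      · omega
      obtain ⟨r, rfl⟩ : ∃ r, i = r + 1 := ⟨i - 1, by omega⟩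
      simp only [Nat.add_sub_cancel] at hθ
      have := L.v_sub_le hk (show k ≤ r by omega) (by omega)
      push_cast at hd
      omega
    exact (ofCell_le_ofCell_iff h' h).2 ⟨le_rfl, by have := h'.2.2.2; omega⟩

end Extremal

section Purity

variable {n : ℕ} {u v : ℕ → ℤ} {i k : ℕ}

/-- `a_{i, u_i + 1}` is minimal, `a_{k, v_k}` is maximal, and they are comparable. -/
def IsMinMaxPair (n : ℕ) (u v : ℕ → ℤ) (i k : ℕ) : Prop :=
  1 ≤ k ∧ k ≤ i ∧ i ≤ n ∧ epsGt1 u n i ∧ thetaGt1 v k ∧ u i - i < v k - k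

/-- The number of elements of a maximal chain from `a_{i, u_i + 1}` to `a_{k, v_k}`. -/
def span (u v : ℕ → ℤ) (i k : ℕ) : ℤ := (v k - 2 * k) - (u i - 2 * i)

def SpanConst (n : ℕ) (u v : ℕ → ℤ) : Prop :=
  ∀ i k i' k', IsMinMaxPair n u v i k → IsMinMaxPair n u v i' k' → span u v i k = span u v i' k'

theorem exists_isMinMaxPair_of_isMin_of_isMax (L : IsLadder n u v) {x y : PL n u v}
    (hx : IsMin x) (hy : IsMax y) (hxy : x ≤ y) :
    ∃ i k, IsMinMaxPair n u v i k ∧ rank y - rank x + 1 = span u v i k := by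
  obtain ⟨i, j, h, rfl⟩ := exists_ofCell x
  obtain ⟨k, l, h', rfl⟩ := exists_ofCell y
  obtain ⟨rfl, hε⟩ := (isMin_ofCell_iff L h).1 hx
  obtain ⟨rfl, hθ⟩ := (isMax_ofCell_iff L h').1 hy
  obtain ⟨hki, hd⟩ := (ofCell_le_ofCell_iff h h').1 hxy
  refine ⟨i, k, ⟨h'.1, hki, h.2.1, hε, hθ, by omega⟩, ?_⟩
  rw [rank_ofCell, rank_ofCell, span]
  ring

theorem IsMinMaxPair.exists_isMin_isMax (L : IsLadder n u v) (hp : IsMinMaxPair n u v i k) :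
    ∃ x y : PL n u v, IsMin x ∧ IsMax y ∧ x ≤ y ∧ rank y - rank x + 1 = span u v i k := by
  obtain ⟨hk, hki, hin, hε, hθ, hd⟩ := hp
  have h : IsCell n u v i (u i + 1) := ⟨by omega, hin, by omega, L.u_lt_v i (by omega) hin⟩
  have h' : IsCell n u v k (v k) := ⟨hk, by omega, L.u_lt_v k hk (by omega), le_rfl⟩
  refine ⟨ofCell h, ofCell h', (isMin_ofCell_iff L h).2 ⟨rfl, hε⟩,
    (isMax_ofCell_iff L h').2 ⟨rfl, hθ⟩, (ofCell_le_ofCell_iff h h').2 ⟨hki, by omega⟩, ?_⟩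
  rw [rank_ofCell, rank_ofCell, span]
  ring

theorem isPure_PL_iff (L : IsLadder n u v) : IsPure (PL n u v) ↔ SpanConst n u v := by
  let := gradeOrder L
  have : Finite (PL n u v) := finite_PL.to_subtype
  rw [isPure_iff_grade_sub_grade_eq]
  constructor
  · intro h i k i' k' hp hp'
    obtain ⟨x, y, hx, hy, hxy, he⟩ := hp.exists_isMin_isMax L
    obtain ⟨x', y', hx', hy', hxy', he'⟩ := hp'.exists_isMin_isMax L
    have : rank y - rank x = rank y' - rank x' := h x y x' y' hx hy hxy hx' hy' hxy'
    omega
  · intro h x y x' y' hx hy hxy hx' hy' hxy'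
    obtain ⟨i, k, hp, he⟩ := exists_isMinMaxPair_of_isMin_of_isMax L hx hy hxy
    obtain ⟨i', k', hp', he'⟩ := exists_isMinMaxPair_of_isMin_of_isMax L hx' hy' hxy'
    have := h i k i' k' hp hp'
    change rank y - rank x = rank y' - rank x'
    omega

end Purity

section Blocks

variable {n : ℕ} {u v : ℕ → ℤ} {p q i k i0 : ℕ}

theorem epsGt1_of_inC (L : IsLadder n u v) {c : ℕ} (hc : inC n u v c) : epsGt1 u n c := by
  rcases hc with ⟨hc, hcn, hvu⟩ | rfl
  · have := L.u_lt_v c hc (by omega)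
    exact Or.inr (by omega)
  · exact Or.inl rfl

theorem IsBlock.thetaGt1_start (L : IsLadder n u v) (hb : IsBlock n u v p q) : thetaGt1 v p := by
  obtain ⟨hp, hpq, hqn, -, -, rfl | ⟨-, hcn, hvu⟩ | hpn⟩ := hb
  · exact Or.inl rfl
  · obtain ⟨r, rfl⟩ : ∃ r, p = r + 1 := ⟨p - 1, by omega⟩
    simp only [Nat.add_sub_cancel] at hvu hcn
    have := L.u_lt_v (r + 1) hp hcn
    refine Or.inr ?_
    simp only [Nat.add_sub_cancel]
    omega
  · omega

theorem IsBlock.u_succ_le (hb : IsBlock n u v p q) {c : ℕ} (hpc : p ≤ c) (hcq : c < q) :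
    u (c + 1) ≤ v c :=
  not_lt.1 fun hvu => hb.2.2.2.2.1 c hpc hcq (Or.inl ⟨by have := hb.1; omega,
    by have := hb.2.2.1; omega, hvu⟩)

theorem IsBlock.exists_isBlockMin (L : IsLadder n u v) (hb : IsBlock n u v p q) :
    ∃ i0, IsBlockMin n u p q i0 :=
  exists_least_of_mem_Icc hb.2.1 (epsGt1_of_inC L hb.2.2.2.1)

theorem exists_isBlock_of_forall_not_inC (hk : 1 ≤ k) (hki : k ≤ i) (hin : i ≤ n)
    (hC : ∀ c, k ≤ c → c < i → ¬ inC n u v c) : ∃ p q, IsBlock n u v p q ∧ p ≤ k ∧ i ≤ q := by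
  obtain ⟨q, hiq, hqn, hq, hqmin⟩ := exists_least_of_mem_Icc (P := inC n u v) hin (Or.inr rfl)
  obtain ⟨c, -, hck, hc, hcmax⟩ :=
    exists_greatest_of_mem_Icc (P := fun t => t = 0 ∨ inC n u v t) (Nat.zero_le (k - 1))
      (Or.inl rfl)
  refine ⟨c + 1, q, ⟨by omega, by omega, hqn, hq, fun j hcj hjq hj => ?_, ?_⟩, by omega, hiq⟩
  · rcases lt_or_ge j k with hjk | hkj
    · exact hcmax j (by omega) (by omega) (Or.inr hj)
    rcases lt_or_ge j i with hji | hij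
    · exact hC j hkj hji hj
    · exact hqmin j hij hjq hj
  · simpa using hc

theorem IsMinMaxPair.exists_isBlock (L : IsLadder n u v) (hp : IsMinMaxPair n u v i k) :
    ∃ p q, IsBlock n u v p q ∧ p ≤ k ∧ i ≤ q := by
  obtain ⟨hk, hki, hin, -, -, hd⟩ := hp
  refine exists_isBlock_of_forall_not_inC hk hki hin fun c hkc hci hc => ?_
  rcases hc with ⟨-, hcn, hvu⟩ | rfl
  · have := L.v_sub_le hk hkc (by omega)
    have := L.u_sub_le (show 1 ≤ c + 1 by omega) (show c + 1 ≤ i by omega) hin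
    push_cast at *
    omega
  · omega

theorem IsBlockMin.isMinMaxPair (L : IsLadder n u v) (hb : IsBlock n u v p q)
    (hbm : IsBlockMin n u p q i0) : IsMinMaxPair n u v i0 p := by
  have hθ := hb.thetaGt1_start L
  obtain ⟨hp, -, hqn, -⟩ := hb
  obtain ⟨hpi, hiq, hε, hmin⟩ := hbm
  have := L.u_sub_eq hp hpi (by omega) hmin
  have := L.u_lt_v p hp (by omega)
  exact ⟨hp, hpi, by omega, hε, hθ, by omega⟩

theorem IsBlockMin.span_eq (L : IsLadder n u v) (hb : IsBlock n u v p q)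
    (hbm : IsBlockMin n u p q i0) : span u v i0 p = v p - u p + i0 - p := by
  have := L.u_sub_eq hb.1 hbm.1 (by have := hbm.2.1; have := hb.2.2.1; omega) hbm.2.2.2
  rw [span]
  omega

end Blocks

section Conditions

variable {n : ℕ} {u v : ℕ → ℤ} {p q i k i0 : ℕ}

def SlopeTwoOnEps (n : ℕ) (u : ℕ → ℤ) (p q : ℕ) : Prop :=
  ∀ i k, p ≤ i → i ≤ k → k ≤ q → epsGt1 u n i → epsGt1 u n k →
    u k - u i = 2 * ((k : ℤ) - (i : ℤ))

def SlopeTwoOnTheta (v : ℕ → ℤ) (p q : ℕ) : Prop :=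
  ∀ i k, p ≤ i → i ≤ k → k ≤ q → thetaGt1 v i → thetaGt1 v k →
    v k - v i = 2 * ((k : ℤ) - (i : ℤ))

/-- For consecutive `ε`-points `i < k` of a block, both `a_{i, u_i+1}` and `a_{k, u_k+1}` lie
below `a_{κ, v_κ}`, where `κ` is the last `θ`-point not after `i`. -/
theorem IsBlock.slopeTwoOnEps (L : IsLadder n u v) (hD : SpanConst n u v)
    (hb : IsBlock n u v p q) : SlopeTwoOnEps n u p q := by
  intro i k hpi hik hkq hi hk
  suffices u i - 2 * i = u k - 2 * k by omega
  refine eq_of_eq_of_consecutive (P := fun t => p ≤ t ∧ t ≤ q ∧ epsGt1 u n t)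
    (g := fun t => u t - 2 * t) ?_ hik ⟨hpi, by omega, hi⟩ ⟨by omega, hkq, hk⟩
  rintro i k hik ⟨hpi, -, hi⟩ ⟨-, hkq, hk⟩ hgap
  have hp := hb.1
  have hqn := hb.2.2.1
  obtain ⟨κ, hpκ, hκi, hκ, hκmax⟩ := exists_greatest_of_mem_Icc hpi (hb.thetaGt1_start L)
  have hvκ := L.v_sub_eq (by omega) hκi (by omega) hκmax
  have huk := L.u_sub_eq (show 1 ≤ i + 1 by omega) (show i + 1 ≤ k by omega) (by omega)
    fun t h1 h2 ht => hgap t (by omega) h2 ⟨by omega, by omega, ht⟩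
  have hstep := hb.u_succ_le hpi (by omega)
  have hui := L.u_lt_v i (by omega) (by omega)
  have := hD i κ k κ ⟨by omega, hκi, by omega, hi, hκ, by omega⟩
    ⟨by omega, by omega, by omega, hk, hκ, by push_cast at huk; omega⟩
  simp only [span] at this ⊢
  omega

/-- For consecutive `θ`-points `i < k` of a block, both `a_{i, v_i}` and `a_{k, v_k}` lie
above `a_{ι, u_ι+1}`, where `ι` is the first `ε`-point not before `k`. -/
theorem IsBlock.slopeTwoOnTheta (L : IsLadder n u v) (hD : SpanConst n u v)
    (hb : IsBlock n u v p q) : SlopeTwoOnTheta v p q := by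
  intro i k hpi hik hkq hi hk
  suffices v i - 2 * i = v k - 2 * k by omega
  refine eq_of_eq_of_consecutive (P := fun t => p ≤ t ∧ t ≤ q ∧ thetaGt1 v t)
    (g := fun t => v t - 2 * t) ?_ hik ⟨hpi, by omega, hi⟩ ⟨by omega, hkq, hk⟩
  rintro i k hik ⟨hpi, -, hi⟩ ⟨-, hkq, hk⟩ hgap
  have hp := hb.1
  have hqn := hb.2.2.1
  obtain ⟨ι, hkι, hιq, hι, hιmin⟩ := exists_least_of_mem_Icc hkq (epsGt1_of_inC L hb.2.2.2.1)
  have huι := L.u_sub_eq (by omega) hkι (by omega) hιmin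
  obtain ⟨r, rfl⟩ : ∃ r, k = r + 1 := ⟨k - 1, by omega⟩
  have hvr := L.v_sub_eq (by omega) (show i ≤ r by omega) (by omega)
    fun t h1 h2 ht => hgap t h1 (by omega) ⟨by omega, by omega, ht⟩
  have hstep := hb.u_succ_le (show p ≤ r by omega) (by omega)
  have huk := L.u_lt_v (r + 1) (by omega) (by omega)
  have := hD ι (r + 1) ι i ⟨by omega, hkι, by omega, hι, hk, by omega⟩
    ⟨by omega, by omega, by omega, hι, hi, by push_cast at *; omega⟩
  simp only [span] at this ⊢
  push_cast at *
  omega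

theorem IsMinMaxPair.span_eq_of_slopeTwo (L : IsLadder n u v) (hp : IsMinMaxPair n u v i k)
    (hb : IsBlock n u v p q) (hpk : p ≤ k) (hiq : i ≤ q) (hbm : IsBlockMin n u p q i0)
    (hA : SlopeTwoOnEps n u p q) (hB : SlopeTwoOnTheta v p q) : span u v i k = span u v i0 p := by
  obtain ⟨-, hki, -, hε, hk, -⟩ := hp
  have hθ := hb.thetaGt1_start L
  have hi0i : i0 ≤ i := not_lt.1 fun h => hbm.2.2.2 i (by omega) h hε
  have := hA i0 i hbm.1 hi0i hiq hbm.2.2.1 hε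
  have := hB p k le_rfl hpk (by omega) hθ hk
  simp only [span]
  omega

theorem spanConst_of_conditions (L : IsLadder n u v)
    (hA : ∀ p q, IsBlock n u v p q → SlopeTwoOnEps n u p q)
    (hB : ∀ p q, IsBlock n u v p q → SlopeTwoOnTheta v p q)
    (hC : ∀ p q i0 q1 i1, IsBlock n u v p q → IsBlockMin n u p q i0 →
      IsBlock n u v 1 q1 → IsBlockMin n u 1 q1 i1 →
      (v p - u p) + (i0 : ℤ) - (p : ℤ) = (v 1 - u 1) + (i1 : ℤ) - 1) :
    SpanConst n u v := by
  intro i k i' k' hp hp'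
  obtain ⟨q1, hb1⟩ : ∃ q1, IsBlock n u v 1 q1 := by
    obtain ⟨p, q, hb, hp1, -⟩ := exists_isBlock_of_forall_not_inC le_rfl le_rfl
      (le_trans hp.1 (le_trans hp.2.1 hp.2.2.1)) fun c h1 h2 => absurd h2 (by omega)
    obtain rfl : p = 1 := le_antisymm hp1 hb.1
    exact ⟨q, hb⟩
  obtain ⟨i1, hbm1⟩ := hb1.exists_isBlockMin L
  have key : ∀ i k, IsMinMaxPair n u v i k → span u v i k = v 1 - u 1 + i1 - 1 := by
    intro i k hp
    obtain ⟨p, q, hb, hpk, hiq⟩ := hp.exists_isBlock L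
    obtain ⟨i0, hbm⟩ := hb.exists_isBlockMin L
    rw [hp.span_eq_of_slopeTwo L hb hpk hiq hbm (hA p q hb) (hB p q hb), hbm.span_eq L hb,
      hC p q i0 q1 i1 hb hbm hb1 hbm1]
  rw [key i k hp, key i' k' hp']

end Conditions

theorem stmt15_general
    (n : ℕ) (u v : ℕ → ℤ)
    (humono : ∀ i, 1 ≤ i → i + 1 ≤ n → u i < u (i + 1))
    (hvmono : ∀ i, 1 ≤ i → i + 1 ≤ n → v i < v (i + 1))
    (huv : ∀ i, 1 ≤ i → i ≤ n → u i < v i) :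
    IsPure ↥(PL n u v) ↔
      ((∀ p q, IsBlock n u v p q → ∀ i k, p ≤ i → i ≤ k → k ≤ q →
          epsGt1 u n i → epsGt1 u n k → u k - u i = 2 * ((k : ℤ) - (i : ℤ))) ∧
       (∀ p q, IsBlock n u v p q → ∀ i k, p ≤ i → i ≤ k → k ≤ q →
          thetaGt1 v i → thetaGt1 v k → v k - v i = 2 * ((k : ℤ) - (i : ℤ))) ∧
       (∀ p q i0 q1 i1, IsBlock n u v p q → IsBlockMin n u p q i0 →
          IsBlock n u v 1 q1 → IsBlockMin n u 1 q1 i1 →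
          (v p - u p) + (i0 : ℤ) - (p : ℤ) = (v 1 - u 1) + (i1 : ℤ) - 1)) := by
  have L : IsLadder n u v := ⟨humono, hvmono, huv⟩
  rw [isPure_PL_iff L]
  refine ⟨fun hD => ⟨fun p q hb => hb.slopeTwoOnEps L hD, fun p q hb => hb.slopeTwoOnTheta L hD,
    fun p q i0 q1 i1 hb hbm hb1 hbm1 => ?_⟩, fun ⟨hA, hB, hC⟩ => spanConst_of_conditions L hA hB hC⟩
  have := hD _ _ _ _ (hbm.isMinMaxPair L hb) (hbm1.isMinMaxPair L hb1)
  rw [hbm.span_eq L hb, hbm1.span_eq L hb1] at this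
  exact_mod_cast this

theorem stmt15
    (n m : ℕ) (u v : ℕ → ℤ)
    (hn : 1 ≤ n) (hnm : n < m)
    (hu1 : u 1 = 1)
    (humono : ∀ i, 1 ≤ i → i + 1 ≤ n → u i < u (i + 1))
    (hum : u n < (m : ℤ))
    (hv1 : 1 < v 1)
    (hvmono : ∀ i, 1 ≤ i → i + 1 ≤ n → v i < v (i + 1))
    (hvn : v n = (m : ℤ))
    (huv : ∀ i, 1 ≤ i → i ≤ n → u i < v i)
    (hstep : ∀ i, 1 ≤ i → i + 1 ≤ n → u (i + 1) ≤ v i + 1) :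
    IsPure ↥(PL n u v) ↔
      ((∀ p q, IsBlock n u v p q → ∀ i k, p ≤ i → i ≤ k → k ≤ q →
          epsGt1 u n i → epsGt1 u n k → u k - u i = 2 * ((k : ℤ) - (i : ℤ))) ∧
       (∀ p q, IsBlock n u v p q → ∀ i k, p ≤ i → i ≤ k → k ≤ q →
          thetaGt1 v i → thetaGt1 v k → v k - v i = 2 * ((k : ℤ) - (i : ℤ))) ∧
       (∀ p q i0 q1 i1, IsBlock n u v p q → IsBlockMin n u p q i0 →
          IsBlock n u v 1 q1 → IsBlockMin n u 1 q1 i1 →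
          (v p - u p) + (i0 : ℤ) - (p : ℤ) = (v 1 - u 1) + (i1 : ℤ) - 1)) :=
  stmt15_general n u v humono hvmono huv

end LadderPaper
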